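/- arXiv:1809.01991 — 4 statements merged into one kernel-verified Lean document; each statement's English description precedes it below -/
import Mathlib

section
/- Absolute Error attains its maximum at the perverse estimator: for any true distribution p on a finite codeframe C with |C| ≥ 2, and any predicted distribution p̂, one has AE(p,p̂) ≤ 2(1 − min_{c∈C} p(c))/|C|, with equality when p̂(c*) = 1 for c* = argmin_{c∈C} p(c) and p̂(c) = 0 for all other c. -/
theorem ae_max {C : Type*} [Fintype C] [DecidableEq C]
    (hcard : 2 ≤ Fintype.card C)
    (p phat : C → ℝ)
    (hp0 : ∀ c, 0 ≤ p c) (hp1 : ∑ c, p c = 1)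
    (hq0 : ∀ c, 0 ≤ phat c) (hq1 : ∑ c, phat c = 1)
    (cstar : C) (hmin : ∀ c, p cstar ≤ p c) :
    (1 / (Fintype.card C : ℝ)) * ∑ c, |phat c - p c|
      ≤ 2 * (1 - p cstar) / (Fintype.card C : ℝ) ∧
    (1 / (Fintype.card C : ℝ)) * ∑ c, |(if c = cstar then (1 : ℝ) else 0) - p c|
      = 2 * (1 - p cstar) / (Fintype.card C : ℝ) := by
  have hn : (0:ℝ) < (Fintype.card C : ℝ) := by
    have : 0 < Fintype.card C := by omega
    exact_mod_cast this
  have hps1 : p cstar ≤ 1 := by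
    calc p cstar ≤ ∑ c, p c := Finset.single_le_sum (fun c _ => hp0 c) (Finset.mem_univ _)
    _ = 1 := hp1
  constructor
  · have key : ∑ c, |phat c - p c| ≤ 2 * (1 - p cstar) := by
      have h1 : ∀ c, |phat c - p c| = phat c + p c - 2 * min (phat c) (p c) := by
        intro c
        rcases le_total (phat c) (p c) with h | h
        · rw [abs_of_nonpos (by linarith), min_eq_left h]; ring
        · rw [abs_of_nonneg (by linarith), min_eq_right h]; ring
      have hsum : ∑ c, |phat c - p c|
          = 2 - 2 * ∑ c, min (phat c) (p c) := by
        simp only [h1]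
        rw [Finset.sum_sub_distrib, Finset.sum_add_distrib, hp1, hq1,
          ← Finset.mul_sum]
        ring
      have hS : p cstar ≤ ∑ c, min (phat c) (p c) := by
        by_cases h : ∃ c, p cstar ≤ phat c
        · obtain ⟨c, hc⟩ := h
          calc p cstar ≤ min (phat c) (p c) := le_min hc (hmin c)
          _ ≤ ∑ c, min (phat c) (p c) :=
            Finset.single_le_sum (fun c _ => le_min (hq0 c) (hp0 c)) (Finset.mem_univ _)
        · push_neg at h
          have : ∑ c, min (phat c) (p c) = ∑ c, phat c := by
            apply Finset.sum_congr rfl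
            intro c _
            exact min_eq_left (le_of_lt (lt_of_lt_of_le (h c) (hmin c)))
          rw [this, hq1]; exact hps1
      linarith
    rw [div_eq_mul_inv, one_mul]
    calc (Fintype.card C : ℝ)⁻¹ * ∑ c, |phat c - p c|
        ≤ (Fintype.card C : ℝ)⁻¹ * (2 * (1 - p cstar)) :=
          mul_le_mul_of_nonneg_left key (by positivity)
      _ = 2 * (1 - p cstar) * (Fintype.card C : ℝ)⁻¹ := by ring
  · have hsum : ∑ c, |(if c = cstar then (1 : ℝ) else 0) - p c|
        = 2 * (1 - p cstar) := by
      rw [← Finset.add_sum_erase _ _ (Finset.mem_univ cstar)]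
      have h1 : |(if cstar = cstar then (1:ℝ) else 0) - p cstar| = 1 - p cstar := by
        rw [if_pos rfl, abs_of_nonneg (by linarith)]
      have h2 : ∑ c ∈ Finset.univ.erase cstar,
          |(if c = cstar then (1:ℝ) else 0) - p c|
          = ∑ c ∈ Finset.univ.erase cstar, p c := by
        apply Finset.sum_congr rfl
        intro c hc
        rw [if_neg (Finset.ne_of_mem_erase hc), abs_of_nonpos (by linarith [hp0 c])]; ring
      have h3 : ∑ c ∈ Finset.univ.erase cstar, p c = 1 - p cstar := by
        have := Finset.add_sum_erase _ p (Finset.mem_univ cstar)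
        rw [hp1] at this; linarith
      rw [h1, h2, h3]; ring
    rw [hsum]; ring
end

section
/- Relative Absolute Error attains its maximum at the perverse estimator: for a true distribution p on C with p(c) > 0 for all c, RAE(p,p̂) = (1/|C|)·Σ_{c∈C} |p̂(c) − p(c)|/p(c) is at most (|C| − 1 + (1 − m)/m)/|C| where m = min_{c∈C} p(c), with equality for the predicted distribution assigning 1 to a class attaining the minimum and 0 elsewhere. -/
theorem rae_max {C : Type*} [Fintype C] [DecidableEq C]
    (hcard : 2 ≤ Fintype.card C)
    (p phat : C → ℝ)
    (hp0 : ∀ c, 0 < p c) (hp1 : ∑ c, p c = 1)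
    (hq0 : ∀ c, 0 ≤ phat c) (hq1 : ∑ c, phat c = 1)
    (cstar : C) (hmin : ∀ c, p cstar ≤ p c) :
    (1 / (Fintype.card C : ℝ)) * ∑ c, |phat c - p c| / p c
      ≤ ((Fintype.card C : ℝ) - 1 + (1 - p cstar) / p cstar) / (Fintype.card C : ℝ) ∧
    (1 / (Fintype.card C : ℝ)) * ∑ c, |(if c = cstar then (1 : ℝ) else 0) - p c| / p c
      = ((Fintype.card C : ℝ) - 1 + (1 - p cstar) / p cstar) / (Fintype.card C : ℝ) := by
  have hncard : 0 < Fintype.card C := lt_of_lt_of_le (by norm_num) hcard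
  have npos : (0:ℝ) < (Fintype.card C : ℝ) := by exact_mod_cast hncard
  have hple : ∀ k, p k ≤ 1 := by
    intro k
    rw [← hp1]
    exact Finset.single_le_sum (fun c _ => (hp0 c).le) (Finset.mem_univ k)
  -- value at a vertex e_k
  have key : ∀ k : C, ∑ c, |(if c = k then (1:ℝ) else 0) - p c| / p c
      = (1 - p k) / p k + ((Fintype.card C : ℝ) - 1) := by
    intro k
    rw [← Finset.add_sum_erase _ _ (Finset.mem_univ k)]
    have h1 : |(if k = k then (1:ℝ) else 0) - p k| / p k = (1 - p k) / p k := by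
      rw [if_pos rfl, abs_of_nonneg (by linarith [hple k])]
    have h2 : ∑ c ∈ Finset.univ.erase k, |(if c = k then (1:ℝ) else 0) - p c| / p c
        = (Fintype.card C : ℝ) - 1 := by
      have : ∀ c ∈ Finset.univ.erase k,
          |(if c = k then (1:ℝ) else 0) - p c| / p c = 1 := by
        intro c hc
        rw [if_neg (Finset.ne_of_mem_erase hc), zero_sub, abs_neg,
          abs_of_nonneg (hp0 c).le, div_self (hp0 c).ne']
      rw [Finset.sum_congr rfl this, Finset.sum_const, nsmul_eq_mul, mul_one,
        Finset.card_erase_of_mem (Finset.mem_univ k), Finset.card_univ]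
      rw [Nat.cast_sub hncard, Nat.cast_one]
    rw [h1, h2]
  have hmax : ∀ k : C, (1 - p k) / p k ≤ (1 - p cstar) / p cstar := by
    intro k
    have h1 : 1 / p k ≤ 1 / p cstar := one_div_le_one_div_of_le (hp0 cstar) (hmin k)
    have e1 : (1 - p k) / p k = 1 / p k - 1 := by
      rw [sub_div, div_self (hp0 k).ne']
    have e2 : (1 - p cstar) / p cstar = 1 / p cstar - 1 := by
      rw [sub_div, div_self (hp0 cstar).ne']
    rw [e1, e2]; linarith
  constructor
  · -- inequality
    have step1 : ∀ c, |phat c - p c| ≤ ∑ k, phat k * |(if c = k then (1:ℝ) else 0) - p c| := by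
      intro c
      have h : phat c - p c = ∑ k, phat k * ((if c = k then (1:ℝ) else 0) - p c) := by
        rw [Finset.sum_congr rfl (fun k _ => mul_sub (phat k) _ _),
          Finset.sum_sub_distrib, ← Finset.sum_mul, hq1, one_mul]
        congr 1
        simp [mul_ite, Finset.sum_ite_eq]
      rw [h]
      refine le_trans (Finset.abs_sum_le_sum_abs _ _) ?_
      refine Finset.sum_le_sum (fun k _ => ?_)
      rw [abs_mul, abs_of_nonneg (hq0 k)]
    have step2 : ∑ c, |phat c - p c| / p c
        ≤ (Fintype.card C : ℝ) - 1 + (1 - p cstar) / p cstar := by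
      calc ∑ c, |phat c - p c| / p c
          ≤ ∑ c, (∑ k, phat k * |(if c = k then (1:ℝ) else 0) - p c|) / p c := by
            refine Finset.sum_le_sum (fun c _ => ?_)
            exact div_le_div_of_nonneg_right (step1 c) (hp0 c).le
        _ = ∑ k, phat k * ∑ c, |(if c = k then (1:ℝ) else 0) - p c| / p c := by
            simp_rw [Finset.sum_div, mul_div_assoc]
            rw [Finset.sum_comm]
            simp_rw [← Finset.mul_sum]
        _ = ∑ k, phat k * ((1 - p k) / p k + ((Fintype.card C : ℝ) - 1)) := by
            exact Finset.sum_congr rfl (fun k _ => by rw [key k])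
        _ ≤ ∑ k, phat k * ((1 - p cstar) / p cstar + ((Fintype.card C : ℝ) - 1)) := by
            refine Finset.sum_le_sum (fun k _ => ?_)
            exact mul_le_mul_of_nonneg_left (by linarith [hmax k]) (hq0 k)
        _ = (Fintype.card C : ℝ) - 1 + (1 - p cstar) / p cstar := by
            rw [← Finset.sum_mul, hq1, one_mul]; ring
    calc (1 / (Fintype.card C : ℝ)) * ∑ c, |phat c - p c| / p c
        ≤ (1 / (Fintype.card C : ℝ)) * ((Fintype.card C : ℝ) - 1 + (1 - p cstar) / p cstar) :=
          mul_le_mul_of_nonneg_left step2 (by positivity)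
      _ = ((Fintype.card C : ℝ) - 1 + (1 - p cstar) / p cstar) / (Fintype.card C : ℝ) := by
          ring
  · rw [key cstar]
    field_simp
    ring
end

section
/- Relative Absolute Error satisfies Binary Relativity: for C = {c₁,c₂}, constant a > 0, true distributions p', p'' with 0 < p'(c₁) < p''(c₁) and p''(c₁) < p''(c₂), and predicted distributions with p̂'(c₁) = p'(c₁) + a and p̂''(c₁) = p''(c₁) + a (values in [0,1], and all true prevalences positive), it holds that RAE(p',p̂') > RAE(p'',p̂''). -/
theorem rae_binary_relativity
    (a p' p'' : ℝ) (ha : 0 < a)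
    (h1 : 0 < p') (h2 : p' < p'') (h3 : p'' < 1 / 2) (h4 : p'' + a ≤ 1) :
    (1 / 2) * (|(p' + a) - p'| / p' + |(1 - (p' + a)) - (1 - p')| / (1 - p'))
      > (1 / 2) * (|(p'' + a) - p''| / p'' + |(1 - (p'' + a)) - (1 - p'')| / (1 - p'')) := by
  have hp'1 : p' < 1 := by linarith
  have hp''1 : p'' < 1 := by linarith
  have h1' : (0:ℝ) < 1 - p' := by linarith
  have h1'' : (0:ℝ) < 1 - p'' := by linarith
  have e1 : (p' + a) - p' = a := by ring
  have e2 : (1 - (p' + a)) - (1 - p') = -a := by ring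
  have e3 : (p'' + a) - p'' = a := by ring
  have e4 : (1 - (p'' + a)) - (1 - p'') = -a := by ring
  rw [e1, e2, e3, e4, abs_neg, abs_of_pos ha]
  have key : a / p' + a / (1 - p') > a / p'' + a / (1 - p'') := by
    rw [div_add_div _ _ (ne_of_gt h1) (ne_of_gt h1'), div_add_div _ _ (ne_of_gt (by linarith : (0:ℝ) < p'')) (ne_of_gt h1''), gt_iff_lt, div_lt_div_iff₀ (mul_pos (by linarith : (0:ℝ) < p'') h1'') (mul_pos h1 h1')]
    nlinarith [mul_pos h1 h1'', mul_pos (sub_pos.mpr h2) ha, mul_pos ha (mul_pos (sub_pos.mpr h2) (by linarith : (0:ℝ) < 1 - p' - p''))]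
  linarith
end

section
/- Squared Error attains its maximum at the perverse estimator: for a true distribution p on a finite codeframe C and any predicted distribution p̂, SE(p,p̂) = (1/|C|)·Σ_{c∈C}(p(c) − p̂(c))² ≤ ((1 − p(c*))² + Σ_{c≠c*} p(c)²)/|C| where c* is a class minimizing p, with equality when p̂(c*) = 1 and p̂(c) = 0 for c ≠ c*. -/
theorem se_max {C : Type*} [Fintype C] [DecidableEq C]
    (hcard : 2 ≤ Fintype.card C)
    (p phat : C → ℝ)
    (hp0 : ∀ c, 0 ≤ p c) (hp1 : ∑ c, p c = 1)
    (hq0 : ∀ c, 0 ≤ phat c) (hq1 : ∑ c, phat c = 1)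
    (cstar : C) (hmin : ∀ c, p cstar ≤ p c) :
    (1 / (Fintype.card C : ℝ)) * ∑ c, (p c - phat c) ^ 2
      ≤ ((1 - p cstar) ^ 2 + ∑ c ∈ Finset.univ \ {cstar}, (p c) ^ 2) / (Fintype.card C : ℝ) ∧
    (1 / (Fintype.card C : ℝ)) * ∑ c, (p c - (if c = cstar then (1 : ℝ) else 0)) ^ 2
      = ((1 - p cstar) ^ 2 + ∑ c ∈ Finset.univ \ {cstar}, (p c) ^ 2) / (Fintype.card C : ℝ) := by
  have hn : (0:ℝ) < (Fintype.card C : ℝ) := by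
    exact_mod_cast Nat.lt_of_lt_of_le (by norm_num) hcard
  have hsub : ({cstar} : Finset C) ⊆ Finset.univ := Finset.subset_univ _
  have hsdiff : ∑ c ∈ Finset.univ \ {cstar}, (p c) ^ 2
      = (∑ c, (p c)^2) - (p cstar)^2 := by
    rw [Finset.sum_sdiff_eq_sub hsub, Finset.sum_singleton]
  -- bounds for the inequality
  have hq_le : ∀ c, phat c ≤ 1 := by
    intro c
    calc phat c ≤ ∑ c, phat c :=
      Finset.single_le_sum (fun i _ => hq0 i) (Finset.mem_univ c)
    _ = 1 := hq1
  have hsq : ∑ c, (phat c)^2 ≤ 1 := by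
    calc ∑ c, (phat c)^2 ≤ ∑ c, phat c := by
          apply Finset.sum_le_sum
          intro c _
          nlinarith [hq0 c, hq_le c]
    _ = 1 := hq1
  have hpq : p cstar ≤ ∑ c, p c * phat c := by
    calc p cstar = p cstar * ∑ c, phat c := by rw [hq1]; ring
    _ = ∑ c, p cstar * phat c := by rw [Finset.mul_sum]
    _ ≤ ∑ c, p c * phat c := by
        apply Finset.sum_le_sum
        intro c _
        exact mul_le_mul_of_nonneg_right (hmin c) (hq0 c)
  have key : ∑ c, (p c - phat c) ^ 2
      ≤ (1 - p cstar) ^ 2 + ∑ c ∈ Finset.univ \ {cstar}, (p c) ^ 2 := by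
    rw [hsdiff]
    have expand : ∑ c, (p c - phat c)^2
        = ∑ c, (p c)^2 - 2 * ∑ c, p c * phat c + ∑ c, (phat c)^2 := by
      have h : ∀ c, (p c - phat c)^2 = (p c)^2 - 2*(p c * phat c) + (phat c)^2 :=
        fun c => by ring
      simp_rw [h, Finset.sum_add_distrib, Finset.sum_sub_distrib, ← Finset.mul_sum]
    rw [expand]
    nlinarith [hsq, hpq]
  constructor
  · have heq : ((1 - p cstar) ^ 2 + ∑ c ∈ Finset.univ \ {cstar}, (p c) ^ 2) / (Fintype.card C : ℝ)
        = (1 / (Fintype.card C : ℝ)) * ((1 - p cstar) ^ 2 + ∑ c ∈ Finset.univ \ {cstar}, (p c) ^ 2) := by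
      ring
    rw [heq]
    exact mul_le_mul_of_nonneg_left key (one_div_nonneg.mpr hn.le)
  · have : ∑ c, (p c - (if c = cstar then (1 : ℝ) else 0)) ^ 2
        = (1 - p cstar) ^ 2 + ∑ c ∈ Finset.univ \ {cstar}, (p c) ^ 2 := by
      rw [Finset.sum_eq_sum_sdiff_singleton_add (Finset.mem_univ cstar)]
      have : ∑ c ∈ Finset.univ \ {cstar}, (p c - (if c = cstar then (1:ℝ) else 0)) ^ 2
          = ∑ c ∈ Finset.univ \ {cstar}, (p c) ^ 2 := by
        apply Finset.sum_congr rfl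
        intro c hc
        rw [Finset.mem_sdiff, Finset.mem_singleton] at hc
        rw [if_neg hc.2, sub_zero]
      rw [this]
      simp
      ring
    rw [this]
    ring
end
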